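/- arXiv:2410.14163 — 2 statements merged into one kernel-verified Lean document; each statement's English description precedes it below -/
import Mathlib

section
/- For every λ ∈ ℝ² there exists ε > 0 such that the point (3/4, 17/24 + ε, 17/24 − ε) belongs to conv(S_λ). -/
/-!
Every `S_λ` contains `S`, the curve `x ↦ (x, 1/(2x), 1/(2x))` for `x ∈ [1/2, 1]`, and
`(3/4, 17/24, 17/24)` is the midpoint of `C = (3/4, 2/3, 2/3) ∈ S` and of the midpoint `M` of
`(1/2, 1, 1), (1, 1/2, 1/2) ∈ S`. If `λ₁ + λ₂ ≠ 0`, the slice `x = 3/4` of `S_λ` is the line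
through `(2/3, 2/3)` with direction `(λ₂, -λ₁)`, which is not parallel to the diagonal
`y₁ = y₂`; mixing a little of a point `E` of that line into the combination moves it off the
diagonal in the required direction. If `λ₁ + λ₂ = 0`, then `S_λ` contains the whole face `x = 0`
and the diagonal, and the point is a combination of one point of each.
-/

open Set

/-- The box `[0,1]³`. -/
def unitCube : Set (ℝ × ℝ × ℝ) :=
  {p | p.1 ∈ Icc (0:ℝ) 1 ∧ p.2.1 ∈ Icc (0:ℝ) 1 ∧ p.2.2 ∈ Icc (0:ℝ) 1}

/-- `S = {(x,y₁,y₂) ∈ [0,1]³ : x·y₁ = 1/2, x·y₂ = 1/2}`. -/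
def setS : Set (ℝ × ℝ × ℝ) :=
  {p ∈ unitCube | p.1 * p.2.1 = 1/2 ∧ p.1 * p.2.2 = 1/2}

/-- The aggregated set `S_λ` with weights `l = (λ₁, λ₂)`. -/
def setAgg (l : ℝ × ℝ) : Set (ℝ × ℝ × ℝ) :=
  {p ∈ unitCube | l.1 * (p.1 * p.2.1 - 1/2) + l.2 * (p.1 * p.2.2 - 1/2) = 0}

theorem Convex.add_add_smul_mem {𝕜 E : Type*} [Field 𝕜] [LinearOrder 𝕜] [IsStrictOrderedRing 𝕜]
    [AddCommGroup E] [Module 𝕜 E] {s : Set E} (hs : Convex 𝕜 s) {x y z : E}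
    (hx : x ∈ s) (hy : y ∈ s) (hz : z ∈ s) {a b c : 𝕜} (ha : 0 ≤ a) (hb : 0 ≤ b) (hc : 0 ≤ c)
    (habc : a + b + c = 1) : a • x + b • y + c • z ∈ s := by
  have := hs.sum_mem (t := Finset.univ) (w := ![a, b, c]) (z := ![x, y, z])
    (by simp [Fin.forall_fin_succ, ha, hb, hc]) (by simp [Fin.sum_univ_three, habc])
    (by simp [Fin.forall_fin_succ, hx, hy, hz])
  simpa [Fin.sum_univ_three] using this

theorem mk_mem_setS {x : ℝ} (hx : x ∈ Icc (1/2 : ℝ) 1) :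
    (x, 1 / (2 * x), 1 / (2 * x)) ∈ setS := by
  obtain ⟨hx₁, hx₂⟩ := hx
  have hy : 1 / (2 * x) ∈ Icc (0 : ℝ) 1 :=
    ⟨by positivity, by rw [div_le_one (by positivity)]; linarith⟩
  have hxy : x * (1 / (2 * x)) = 1 / 2 := by field_simp
  exact ⟨⟨⟨by linarith, hx₂⟩, hy, hy⟩, hxy, hxy⟩

theorem setS_subset_setAgg (l : ℝ × ℝ) : setS ⊆ setAgg l := by
  rintro p ⟨hp, h₁, h₂⟩
  refine ⟨hp, ?_⟩
  rw [h₁, h₂]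
  ring

theorem mk_mem_setAgg_three_quarters (l : ℝ × ℝ) {t : ℝ}
    (h₁ : 2/3 + t * l.2 ∈ Icc (0 : ℝ) 1) (h₂ : 2/3 - t * l.1 ∈ Icc (0 : ℝ) 1) :
    ((3/4 : ℝ), 2/3 + t * l.2, 2/3 - t * l.1) ∈ setAgg l :=
  ⟨⟨⟨by norm_num, by norm_num⟩, h₁, h₂⟩, by ring⟩

theorem mem_setAgg_of_add_eq_zero {l : ℝ × ℝ} (hl : l.1 + l.2 = 0) {p : ℝ × ℝ × ℝ}
    (hp : p ∈ unitCube) (h : p.1 * p.2.1 = p.1 * p.2.2) : p ∈ setAgg l := by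
  refine ⟨hp, ?_⟩
  rw [h, eq_neg_of_add_eq_zero_right hl]
  ring

theorem mem_convexHull_setAgg_of_add_eq_zero {l : ℝ × ℝ} (hl : l.1 + l.2 = 0) :
    ((3/4 : ℝ), (17/24 + 1/16 : ℝ), (17/24 - 1/16 : ℝ)) ∈ convexHull ℝ (setAgg l) := by
  have hface : ((0 : ℝ), (23/24 : ℝ), (11/24 : ℝ)) ∈ setAgg l :=
    mem_setAgg_of_add_eq_zero hl ⟨by norm_num, by norm_num, by norm_num⟩ (by norm_num)
  have hdiag : ((1 : ℝ), (17/24 : ℝ), (17/24 : ℝ)) ∈ setAgg l :=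
    mem_setAgg_of_add_eq_zero hl ⟨by norm_num, by norm_num, by norm_num⟩ rfl
  have := convex_convexHull ℝ (setAgg l) (subset_convexHull ℝ _ hface)
    (subset_convexHull ℝ _ hdiag) (a := 1/4) (b := 3/4) (by norm_num) (by norm_num) (by norm_num)
  convert this using 1
  simp only [Prod.smul_mk, Prod.mk_add_mk, smul_eq_mul, Prod.mk.injEq]
  norm_num

theorem mem_convexHull_setAgg_of_abs_add_abs_le (l : ℝ × ℝ) {t : ℝ}
    (ht : |t * l.1| + |t * l.2| ≤ 1/3) :
    ((3/4 : ℝ), 17/24 + t * (l.1 + l.2) / 12, 17/24 - t * (l.1 + l.2) / 12) ∈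
      convexHull ℝ (setAgg l) := by
  obtain ⟨h₁, h₁'⟩ := abs_le.mp (le_trans (le_add_of_nonneg_right (abs_nonneg _)) ht)
  obtain ⟨h₂, h₂'⟩ := abs_le.mp (le_trans (le_add_of_nonneg_left (abs_nonneg _)) ht)
  obtain ⟨h₃, h₃'⟩ := abs_le.mp ((abs_sub _ _).trans (add_comm |t * l.2| _ ▸ ht))
  have hS : setS ⊆ convexHull ℝ (setAgg l) :=
    (setS_subset_setAgg l).trans (subset_convexHull ℝ _)
  have hA := hS (mk_mem_setS (x := 1/2) ⟨by norm_num, by norm_num⟩)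
  have hB := hS (mk_mem_setS (x := 1) ⟨by norm_num, by norm_num⟩)
  have hC := hS (mk_mem_setS (x := 3/4) ⟨by norm_num, by norm_num⟩)
  have hE := subset_convexHull ℝ _ <| mk_mem_setAgg_three_quarters l (t := t)
    ⟨by linarith, by linarith⟩ ⟨by linarith, by linarith⟩
  have hM := convex_convexHull ℝ (setAgg l) hA hB (a := 1/2) (b := 1/2)
    (by norm_num) (by norm_num) (by norm_num)
  -- shifting the weight `t * l.2 - t * l.1` from `M` to `C` cancels the diagonal drift of `E`
  have := (convex_convexHull ℝ (setAgg l)).add_add_smul_mem hM hC hE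
    (a := 1/2 - (t * l.2 - t * l.1)) (b := 1/3 + (t * l.2 - t * l.1)) (c := 1/6)
    (by linarith) (by linarith) (by norm_num) (by ring)
  convert this using 1
  simp only [Prod.smul_mk, Prod.mk_add_mk, smul_eq_mul, Prod.mk.injEq]
  refine ⟨?_, ?_, ?_⟩ <;> ring

theorem exists_mul_add_pos_and_abs_add_abs_le {μ ν : ℝ} (h : μ + ν ≠ 0) :
    ∃ t : ℝ, 0 < t * (μ + ν) ∧ |t * μ| + |t * ν| ≤ 1/3 := by
  have hpos : 0 < |μ| + |ν| := lt_of_lt_of_le (abs_pos.mpr h) (abs_add_le μ ν)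
  refine ⟨(μ + ν) / (3 * (|μ| + |ν|) ^ 2), ?_, ?_⟩
  · rw [div_mul_eq_mul_div]
    exact div_pos (mul_self_pos.mpr h) (by positivity)
  have hden : (0 : ℝ) < 3 * (|μ| + |ν|) ^ 2 := by positivity
  rw [abs_mul, abs_mul, ← mul_add, abs_div, abs_of_pos hden, div_mul_eq_mul_div,
    div_le_iff₀ hden]
  nlinarith [abs_add_le μ ν]

theorem stmt5 (l : ℝ × ℝ) :
    ∃ ε : ℝ, 0 < ε ∧
      ((3/4 : ℝ), (17/24 + ε : ℝ), (17/24 - ε : ℝ)) ∈ convexHull ℝ (setAgg l) := by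
  by_cases hl : l.1 + l.2 = 0
  · exact ⟨1/16, by norm_num, mem_convexHull_setAgg_of_add_eq_zero hl⟩
  · obtain ⟨t, hpos, ht⟩ := exists_mul_add_pos_and_abs_add_abs_le hl
    exact ⟨t * (l.1 + l.2) / 12, by linarith, mem_convexHull_setAgg_of_abs_add_abs_le l ht⟩
end

section
/- ⋂_{λ ∈ ℝ²} conv(S_λ) ⊆ {(x, y1, y2) ∈ [0,1]³ : x·(y1 + y2) ≥ 1}. -/
open Set

/-
Taking `λ = (1, 1)`, the aggregated set `S_λ` is the part of the cube on the surface
`x·(y₁ + y₂) = 1`. This surface lies in the region `x > 0, y₁ + y₂ ≥ 1/x`, the preimage under the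
linear map `(x, y₁, y₂) ↦ (x, y₁ + y₂)` of the epigraph of the convex function `x ↦ 1/x` on
`(0, ∞)`. Intersected with the cube this region is convex, so it contains `conv(S_λ)`.
-/

theorem convex_unitCube : Convex ℝ unitCube :=
  (convex_Icc 0 1).prod ((convex_Icc 0 1).prod (convex_Icc 0 1))

theorem convex_one_le_mul_of_pos : Convex ℝ {q : ℝ × ℝ | 0 < q.1 ∧ 1 ≤ q.1 * q.2} := by
  have hepi :
      {q : ℝ × ℝ | 0 < q.1 ∧ 1 ≤ q.1 * q.2} = {q | q.1 ∈ Ioi 0 ∧ q.1 ^ (-1 : ℤ) ≤ q.2} := by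
    ext ⟨x, s⟩
    refine and_congr_right fun hx => ?_
    rw [zpow_neg_one, inv_le_iff_one_le_mul₀' hx]
  rw [hepi]
  exact (convexOn_zpow (𝕜 := ℝ) (-1)).convex_epigraph

def cubeAboveHyperbola : Set (ℝ × ℝ × ℝ) :=
  unitCube ∩ {p | 0 < p.1 ∧ 1 ≤ p.1 * (p.2.1 + p.2.2)}

theorem convex_cubeAboveHyperbola : Convex ℝ cubeAboveHyperbola :=
  convex_unitCube.inter <| convex_one_le_mul_of_pos.linear_preimage <|
    (LinearMap.fst ℝ ℝ (ℝ × ℝ)).prod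
      (LinearMap.fst ℝ ℝ ℝ ∘ₗ LinearMap.snd ℝ ℝ (ℝ × ℝ) +
        LinearMap.snd ℝ ℝ ℝ ∘ₗ LinearMap.snd ℝ ℝ (ℝ × ℝ))

theorem setAgg_one_one_subset : setAgg (1, 1) ⊆ cubeAboveHyperbola := by
  rintro p ⟨hp, hsum⟩
  have hmul : p.1 * (p.2.1 + p.2.2) = 1 := by linarith
  have hx : p.1 ≠ 0 := left_ne_zero_of_mul_eq_one hmul
  exact ⟨hp, hp.1.1.lt_of_ne' hx, hmul.ge⟩

theorem stmt6 :
    (⋂ l : ℝ × ℝ, convexHull ℝ (setAgg l)) ⊆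
      {p ∈ unitCube | p.1 * (p.2.1 + p.2.2) ≥ 1} := by
  intro p hp
  have hp_hull : p ∈ convexHull ℝ (setAgg (1, 1)) := mem_iInter.mp hp (1, 1)
  obtain ⟨hcube, -, hge⟩ :=
    convexHull_min setAgg_one_one_subset convex_cubeAboveHyperbola hp_hull
  exact ⟨hcube, hge⟩
end
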